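/- arXiv:1206.0626 — 12 statements merged into one kernel-verified Lean document; each statement's English description precedes it below -/
import Mathlib

section
/- For every unbounded metric space X, the partially ordered set ω^{↑X} of all bounded-to-bounded functions f: X → ω (ordered pointwise: f ≤ g iff f(x) ≤ g(x) for all x) has coinitiality at most 𝔡, the dominating number. That is, there exists a family E ⊆ ω^{↑X} of cardinality at most 𝔡 such that every g ∈ ω^{↑X} is pointwise bounded below by some member of E. -/
/-- A function `f : X → ℕ` on a metric space is bounded-to-bounded if a subset `B ⊆ X` is
bounded iff its image `f '' B` is finite. -/
def B2BNat {X : Type*} [MetricSpace X] (f : X → ℕ) : Prop :=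
  ∀ B : Set X, Bornology.IsBounded B ↔ (f '' B).Finite

/-- The dominating number 𝔡: the least cardinality of a cofinal family in `(ℕ → ℕ, ≤)`. -/
noncomputable def domNum : Cardinal :=
  sInf {c : Cardinal |
    ∃ D : Set (ℕ → ℕ), Cardinal.mk D = c ∧ ∀ g : ℕ → ℕ, ∃ f ∈ D, ∀ n, g n ≤ f n}

/-! Fix a bounded-to-bounded gauge `ρ : X → ℕ` (e.g. `x ↦ ⌈d(x, x₀)⌉`). Each `f : ℕ → ℕ` gives a
monotone `h ≥ f, id`, and the "inverse" `x ↦ min {n | ρ x ≤ h n}` is bounded-to-bounded. If `g` is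
bounded-to-bounded, then `ρ ≤ φ ∘ g` for some `φ : ℕ → ℕ`; once `f` dominates `φ`, the inverse
built from `f` lies below `g`. Letting `f` range over a dominating family of size `𝔡` gives the
coinitial family. -/

open Bornology

lemma b2bNat_iff_bddAbove {X : Type*} [MetricSpace X] {f : X → ℕ} :
    B2BNat f ↔ ∀ B : Set X, IsBounded B ↔ BddAbove (f '' B) := by
  simp only [B2BNat, Set.finite_iff_bddAbove]

lemma exists_b2bNat (X : Type*) [MetricSpace X] : ∃ ρ : X → ℕ, B2BNat ρ := by
  rcases isEmpty_or_nonempty X with _ | ⟨⟨x₀⟩⟩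
  · exact ⟨isEmptyElim, fun B => by simp [Set.eq_empty_of_isEmpty B]⟩
  refine ⟨fun x => ⌈dist x x₀⌉₊, b2bNat_iff_bddAbove.2 fun B => ?_⟩
  rw [Metric.isBounded_iff_subset_closedBall x₀]
  constructor
  · rintro ⟨r, hr⟩
    exact ⟨⌈r⌉₊, by
      rintro _ ⟨x, hx, rfl⟩
      exact Nat.ceil_le_ceil (hr hx)⟩
  · rintro ⟨n, hn⟩
    exact ⟨n, fun x hx => Metric.mem_closedBall.2
      ((Nat.le_ceil (dist x x₀)).trans (by exact_mod_cast hn ⟨x, hx, rfl⟩))⟩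

lemma B2BNat.exists_le_comp {X : Type*} [MetricSpace X] {ρ g : X → ℕ} (hρ : B2BNat ρ)
    (hg : B2BNat g) : ∃ φ : ℕ → ℕ, ∀ x, ρ x ≤ φ (g x) := by
  have hbdd (n : ℕ) : BddAbove (ρ '' (g ⁻¹' Set.Iic n)) := by
    refine (b2bNat_iff_bddAbove.1 hρ _).1 ((b2bNat_iff_bddAbove.1 hg _).2 ⟨n, ?_⟩)
    rintro _ ⟨x, hx, rfl⟩
    exact hx
  choose φ hφ using hbdd
  exact ⟨φ, fun x => hφ (g x) ⟨x, le_refl (g x), rfl⟩⟩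

/-- `lowerInv h m` is the least `n` with `m ≤ h n` (and `0` if there is none). -/
noncomputable def lowerInv (h : ℕ → ℕ) (m : ℕ) : ℕ := sInf {n | m ≤ h n}

section lowerInv

variable {h : ℕ → ℕ} {m n : ℕ}

lemma lowerInv_le (hmn : m ≤ h n) : lowerInv h m ≤ n := Nat.sInf_le hmn

lemma le_apply_lowerInv (hh : ∀ n, n ≤ h n) : m ≤ h (lowerInv h m) :=
  Nat.sInf_mem (s := {n | m ≤ h n}) ⟨m, hh m⟩

lemma lowerInv_le_self (hh : ∀ n, n ≤ h n) : lowerInv h m ≤ m := lowerInv_le (hh m)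

end lowerInv

lemma B2BNat.lowerInv_comp {X : Type*} [MetricSpace X] {ρ : X → ℕ} {h : ℕ → ℕ}
    (hρ : B2BNat ρ) (hmono : Monotone h) (hh : ∀ n, n ≤ h n) : B2BNat (lowerInv h ∘ ρ) := by
  rw [b2bNat_iff_bddAbove] at hρ ⊢
  refine fun B => (hρ B).trans ⟨?_, ?_⟩
  · rintro ⟨N, hN⟩
    refine ⟨N, ?_⟩
    rintro _ ⟨x, hx, rfl⟩
    exact (lowerInv_le_self hh).trans (hN ⟨x, hx, rfl⟩)
  · rintro ⟨n, hn⟩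
    refine ⟨h n, ?_⟩
    rintro _ ⟨x, hx, rfl⟩
    exact (le_apply_lowerInv hh).trans (hmono (hn ⟨x, hx, rfl⟩))

lemma exists_dominating_mk_eq_domNum :
    ∃ D : Set (ℕ → ℕ), Cardinal.mk D = domNum ∧ ∀ g : ℕ → ℕ, ∃ f ∈ D, ∀ n, g n ≤ f n :=
  csInf_mem (s := {c : Cardinal | ∃ D : Set (ℕ → ℕ), Cardinal.mk D = c ∧
      ∀ g : ℕ → ℕ, ∃ f ∈ D, ∀ n, g n ≤ f n})
    ⟨_, Set.univ, rfl, fun g => ⟨g, trivial, fun _ => le_rfl⟩⟩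

theorem stmt1_general {X : Type*} [MetricSpace X] :
    ∃ E : Set (X → ℕ), Cardinal.mk E ≤ Cardinal.lift.{_} domNum ∧ (∀ e ∈ E, B2BNat e) ∧
      ∀ g : X → ℕ, B2BNat g → ∃ e ∈ E, ∀ x, e x ≤ g x := by
  obtain ⟨ρ, hρ⟩ := exists_b2bNat X
  obtain ⟨D, hD, hdom⟩ := exists_dominating_mk_eq_domNum
  let majorant (f : ℕ → ℕ) (n : ℕ) : ℕ := partialSups f n + n
  have majorant_mono (f) : Monotone (majorant f) := fun _ _ hab =>
    add_le_add ((partialSups f).monotone hab) hab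
  have le_majorant (f n) : n ≤ majorant f n := Nat.le_add_left n _
  let e (f : ℕ → ℕ) : X → ℕ := lowerInv (majorant f) ∘ ρ
  refine ⟨e '' D, ?_, ?_, ?_⟩
  · simpa [hD] using Cardinal.mk_image_le_lift (f := e) (s := D)
  · rintro _ ⟨f, -, rfl⟩
    exact hρ.lowerInv_comp (majorant_mono f) (le_majorant f)
  · intro g hg
    obtain ⟨φ, hφ⟩ := hρ.exists_le_comp hg
    obtain ⟨f, hfD, hf⟩ := hdom φ
    refine ⟨e f, ⟨f, hfD, rfl⟩, fun x => lowerInv_le ?_⟩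
    calc ρ x ≤ φ (g x) := hφ x
      _ ≤ f (g x) := hf _
      _ ≤ majorant f (g x) := (le_partialSups f _).trans (Nat.le_add_right _ _)

/-- For every unbounded metric space `X`, the poset of bounded-to-bounded functions
`f : X → ℕ` (pointwise order) has coinitiality at most 𝔡. -/
theorem stmt1 {X : Type*} [MetricSpace X] (hX : ¬ Bornology.IsBounded (Set.univ : Set X)) :
    ∃ E : Set (X → ℕ), Cardinal.mk E ≤ Cardinal.lift.{_} domNum ∧ (∀ e ∈ E, B2BNat e) ∧
      ∀ g : X → ℕ, B2BNat g → ∃ e ∈ E, ∀ x, e x ≤ g x :=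
  stmt1_general
end

section
/- Let φ: ω → ω be finite-to-one, and for a finite-to-one f: ω → ω define f̄(n) = max({0} ∪ {k ∈ ω : f(k) ≤ n}). If F ⊆ ω^{↑ω} is cofinal in the pointwise order on finite-to-one functions ω → ω, then the family {f̄ ∘ φ : f ∈ F} is coinitial in the set of finite-to-one functions g: ω → ω composed appropriately: for every finite-to-one g: ω → ω there exists f ∈ F with f̄(φ(x)) ≤ g(x) for all x ∈ ω. -/
/-- A function `f : ℕ → ℕ` is finite-to-one if each preimage `f ⁻¹' {n}` is finite. -/
def FinToOne (f : ℕ → ℕ) : Prop := ∀ n : ℕ, (f ⁻¹' {n}).Finite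

/-- `fbar f n = max ({0} ∪ {k : f k ≤ n})`. -/
noncomputable def fbar (f : ℕ → ℕ) (n : ℕ) : ℕ := sSup (insert 0 {k | f k ≤ n})

/-!
Given `g`, choose a finite-to-one `h` with `h k > k` and `h k > φ x` whenever `g x < k`, and a
dominating `f ∈ F`. If `f k ≤ φ x` then `h k ≤ φ x`, which forces `k ≤ g x`; hence
`fbar f (φ x) ≤ g x`.
-/

lemma FinToOne.finite_setOf_lt {g : ℕ → ℕ} (hg : FinToOne g) (k : ℕ) : {x | g x < k}.Finite :=
  (Set.finite_Iio k).preimage' fun n _ => hg n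

lemma finToOne_of_self_le {h : ℕ → ℕ} (hh : ∀ k, k ≤ h k) : FinToOne h := fun n =>
  (Set.finite_le_nat n).subset fun k hk => (hh k).trans_eq hk

lemma fbar_le {f : ℕ → ℕ} {n m : ℕ} (hf : ∀ k, f k ≤ n → k ≤ m) : fbar f n ≤ m :=
  csSup_le ⟨0, Set.mem_insert 0 _⟩ <| by
    rintro k (rfl | hk)
    · exact Nat.zero_le m
    · exact hf k hk

lemma exists_finToOne_gt_on_sublevel (φ : ℕ → ℕ) {g : ℕ → ℕ} (hg : FinToOne g) :
    ∃ h : ℕ → ℕ, FinToOne h ∧ ∀ k x, g x < k → φ x < h k := by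
  classical
  refine ⟨fun k => k + 1 + (hg.finite_setOf_lt k).toFinset.sup φ,
    finToOne_of_self_le fun k => by omega, fun k x hx => ?_⟩
  have : φ x ≤ (hg.finite_setOf_lt k).toFinset.sup φ :=
    Finset.le_sup ((hg.finite_setOf_lt k).mem_toFinset.mpr hx)
  dsimp only
  omega

theorem stmt2_general (φ : ℕ → ℕ)
    (F : Set (ℕ → ℕ))
    (hcof : ∀ g : ℕ → ℕ, FinToOne g → ∃ f ∈ F, ∀ n, g n ≤ f n) :
    ∀ g : ℕ → ℕ, FinToOne g → ∃ f ∈ F, ∀ x : ℕ, fbar f (φ x) ≤ g x := by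
  intro g hg
  obtain ⟨h, hh, hφh⟩ := exists_finToOne_gt_on_sublevel φ hg
  obtain ⟨f, hfF, hhf⟩ := hcof h hh
  refine ⟨f, hfF, fun x => fbar_le fun k hfk => ?_⟩
  by_contra! hgk
  exact ((hφh k x hgk).trans_le (hhf k)).not_ge hfk

/-- If `φ` is finite-to-one and `F` is cofinal in the finite-to-one functions, then the family
`{fbar f ∘ φ : f ∈ F}` is coinitial in the finite-to-one functions. -/
theorem stmt2 (φ : ℕ → ℕ) (hφ : FinToOne φ)
    (F : Set (ℕ → ℕ)) (hF : ∀ f ∈ F, FinToOne f)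
    (hcof : ∀ g : ℕ → ℕ, FinToOne g → ∃ f ∈ F, ∀ n, g n ≤ f n) :
    ∀ g : ℕ → ℕ, FinToOne g → ∃ f ∈ F, ∀ x : ℕ, fbar f (φ x) ≤ g x :=
  stmt2_general φ F hcof
end

section
/- Two subsets P, Q of a metric space (X,d) are asymptotically disjoint (i.e., for every real ε > 0 the intersection B(P,ε) ∩ B(Q,ε) of their ε-neighborhoods is bounded) if and only if there exists a bounded-to-bounded function f: X → ω such that the intersection B(P,f) ∩ B(Q,f) is bounded, where B(A,f) = ⋃_{a∈A} {y : d(y,a) ≤ f(a)}. -/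
/-- The `f`-neighborhood `B(A,f) = ⋃_{a ∈ A} {y : d(y,a) ≤ f a}` of a set `A`. -/
def fnbhd {X : Type*} [MetricSpace X] (A : Set X) (f : X → ℝ) : Set X :=
  {y | ∃ a ∈ A, dist y a ≤ f a}

/-!
For the forward direction fix a base point `x₀` and radii `r n > 0` with
`B(P, n+1) ∩ B(Q, n+1) ⊆ closedBall x₀ (r n)`, and let `f x` be the largest `n` with
`n + 1 + r n ≤ d(x, x₀)` (or `0`). Then `f` is bounded-to-bounded, and a point `y` of
`B(P, f) ∩ B(Q, f)`, witnessed by `p` and `q`, lies in `closedBall x₀ (r n)` for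
`n = max (f p) (f q)`; if `n = f p ≠ 0`, then `d(p, x₀) ≥ f p + 1 + r (f p)` forces
`d(y, x₀) > r (f p)`, so in fact `n = 0` and `y ∈ closedBall x₀ (r 0)`.

Conversely, if `f` is bounded-to-bounded, the set where `f ≤ ⌈ε⌉` is bounded; off it the
`ε`-neighborhoods are contained in the `f`-neighborhoods.
-/

open Metric Bornology

section

variable {X : Type*} [MetricSpace X]

namespace B2BNat

theorem isBounded_setOf_le {f : X → ℕ} (hf : B2BNat f) (n : ℕ) : IsBounded {x | f x ≤ n} :=
  (hf _).2 <| (Set.finite_Iic n).subset <| Set.image_subset_iff.2 fun _ hx => hx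

theorem of_isEmpty [IsEmpty X] (f : X → ℕ) : B2BNat f := fun B => by
  simp [Set.eq_empty_of_isEmpty B]

end B2BNat

noncomputable def scaleIndex (R : ℕ → ℝ) (t : ℝ) : ℕ :=
  Nat.findGreatest (fun n => R n ≤ t) ⌈t⌉₊

theorem scaleIndex_le_ceil (R : ℕ → ℝ) (t : ℝ) : scaleIndex R t ≤ ⌈t⌉₊ :=
  Nat.findGreatest_le _

theorem le_scaleIndex {R : ℕ → ℝ} (hR : ∀ n : ℕ, (n : ℝ) ≤ R n) {n : ℕ} {t : ℝ} (h : R n ≤ t) :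
    n ≤ scaleIndex R t :=
  Nat.le_findGreatest (Nat.cast_le.1 (((hR n).trans h).trans (Nat.le_ceil t))) h

theorem apply_scaleIndex_le {R : ℕ → ℝ} {t : ℝ} (h : scaleIndex R t ≠ 0) :
    R (scaleIndex R t) ≤ t :=
  Nat.findGreatest_of_ne_zero rfl h

theorem b2bNat_scaleIndex_dist {R : ℕ → ℝ} (hR : ∀ n : ℕ, (n : ℝ) ≤ R n) (x₀ : X) :
    B2BNat fun x => scaleIndex R (dist x x₀) := by
  intro B
  constructor
  · intro hB
    obtain ⟨r, hr⟩ := hB.subset_closedBall x₀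
    refine (Set.finite_Iic ⌈r⌉₊).subset ?_
    rintro - ⟨x, hx, rfl⟩
    exact (scaleIndex_le_ceil _ _).trans (Nat.ceil_mono (hr hx))
  · intro hB
    obtain ⟨N, hN⟩ := hB.bddAbove
    refine (isBounded_ball (x := x₀) (r := R (N + 1))).subset fun x hx => ?_
    rw [mem_ball]
    by_contra! h
    exact (le_scaleIndex hR h).not_gt (Nat.lt_succ_of_le (hN ⟨x, hx, rfl⟩))

theorem exists_b2bNat_isBounded_fnbhd_inter {P Q : Set X} (x₀ : X)
    (h : ∀ ε : ℝ, 0 < ε → IsBounded (fnbhd P (fun _ => ε) ∩ fnbhd Q (fun _ => ε))) :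
    ∃ f : X → ℕ, B2BNat f ∧
      IsBounded (fnbhd P (fun x => (f x : ℝ)) ∩ fnbhd Q (fun x => (f x : ℝ))) := by
  choose r hr using fun n : ℕ =>
    (h ((n : ℝ) + 1) n.cast_add_one_pos).subset_closedBall_lt 0 x₀
  set f : X → ℕ := fun x => scaleIndex (fun n => n + 1 + r n) (dist x x₀)
  have hR : ∀ n : ℕ, (n : ℝ) ≤ n + 1 + r n := fun n => by linarith [(hr n).1]
  have vanish : ∀ a y, dist y a ≤ f a → dist y x₀ ≤ r (f a) → f a = 0 := fun a y hya hy => by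
    by_contra ha
    have hfa : (f a : ℝ) + 1 + r (f a) ≤ dist a x₀ := apply_scaleIndex_le ha
    linarith [dist_triangle_left a x₀ y]
  refine ⟨f, b2bNat_scaleIndex_dist hR x₀, (isBounded_closedBall (x := x₀) (r := r 0)).subset ?_⟩
  rintro y ⟨⟨p, hp, hyp⟩, ⟨q, hq, hyq⟩⟩
  have hle : ∀ a, f a ≤ max (f p) (f q) → dist y a ≤ f a → dist y a ≤ max (f p) (f q) + 1 :=
    fun a ha hya => hya.trans (by exact_mod_cast ha.trans (Nat.le_succ _))
  have hy : dist y x₀ ≤ r (max (f p) (f q)) :=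
    (hr _).2 ⟨⟨p, hp, hle p (le_max_left _ _) hyp⟩, ⟨q, hq, hle q (le_max_right _ _) hyq⟩⟩
  rw [mem_closedBall]
  rcases max_choice (f p) (f q) with hmax | hmax <;> rw [hmax] at hy
  · rwa [← vanish p y hyp hy]
  · rwa [← vanish q y hyq hy]

theorem isBounded_fnbhd_const_inter {f : X → ℕ} (hf : B2BNat f) {P Q : Set X}
    (h : IsBounded (fnbhd P (fun x => (f x : ℝ)) ∩ fnbhd Q (fun x => (f x : ℝ)))) (ε : ℝ) :
    IsBounded (fnbhd P (fun _ => ε) ∩ fnbhd Q (fun _ => ε)) := by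
  refine (h.union ((hf.isBounded_setOf_le ⌈ε⌉₊).cthickening (δ := ε))).subset ?_
  rintro y ⟨⟨p, hp, hyp⟩, ⟨q, hq, hyq⟩⟩
  by_cases hfp : f p ≤ ⌈ε⌉₊
  · exact .inr (mem_cthickening_of_dist_le y p ε _ hfp hyp)
  by_cases hfq : f q ≤ ⌈ε⌉₊
  · exact .inr (mem_cthickening_of_dist_le y q ε _ hfq hyq)
  exact .inl ⟨⟨p, hp, hyp.trans (Nat.lt_of_ceil_lt (not_le.1 hfp)).le⟩,
    ⟨q, hq, hyq.trans (Nat.lt_of_ceil_lt (not_le.1 hfq)).le⟩⟩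

end

/-- Two subsets `P, Q` of a metric space are asymptotically disjoint (for every `ε > 0` the
intersection `B(P,ε) ∩ B(Q,ε)` is bounded) iff there is a bounded-to-bounded `f : X → ℕ`
with `B(P,f) ∩ B(Q,f)` bounded. -/
theorem stmt3 {X : Type*} [MetricSpace X] (P Q : Set X) :
    (∀ ε : ℝ, 0 < ε →
        Bornology.IsBounded (fnbhd P (fun _ => ε) ∩ fnbhd Q (fun _ => ε))) ↔
    (∃ f : X → ℕ, B2BNat f ∧
        Bornology.IsBounded
          (fnbhd P (fun x => (f x : ℝ)) ∩ fnbhd Q (fun x => (f x : ℝ)))) := by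
  refine ⟨fun h => ?_, fun ⟨f, hf, hbd⟩ ε _ => isBounded_fnbhd_const_inter hf hbd ε⟩
  cases isEmpty_or_nonempty X
  · exact ⟨0, B2BNat.of_isEmpty 0, by simp [Set.eq_empty_of_isEmpty]⟩
  · exact exists_b2bNat_isBounded_fnbhd_inter (Classical.arbitrary X) h
end

section
/- A subset A of a metric space X is asymptotically isolated (i.e., asymptotically disjoint from its complement X \ A) if and only if there exists a bounded-to-bounded function f: X → ω such that B(A,f) = A, where B(A,f) = ⋃_{a∈A} {y ∈ X : d(y,a) ≤ f(a)}. -/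
/-!
If `B(A, ε) ∩ B(Aᶜ, ε)` is bounded for every `ε`, let `f x` be the largest integer radius
`n ≤ ⌊d(x, x₀)⌋` such that `closedBall x n ⊆ A` (for `x ∈ A`; for `x ∉ A` simply `⌊d(x, x₀)⌋`).
Then `B(A, f) = A`, and a level set `{f = n}` is bounded: its points are either within `n + 1`
of `x₀`, or lie in `A` with a point of `Aᶜ` within `n + 1`, i.e. in `B(A, n+1) ∩ B(Aᶜ, n+1)`.
Conversely, a point `ε`-close to `a ∈ A` and to `b ∉ A` forces `f a < d(a, b) ≤ 2ε`, so
`B(A, ε) ∩ B(Aᶜ, ε)` lies in the `ε`-thickening of the bounded set `{f ≤ 2ε}`.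
-/

open Metric Bornology Set

section
variable {X : Type*} [MetricSpace X]

lemma fnbhd_eq_self_iff {A : Set X} {f : X → ℝ} (hf : ∀ a ∈ A, 0 ≤ f a) :
    fnbhd A f = A ↔ ∀ a ∈ A, closedBall a (f a) ⊆ A := by
  constructor
  · rintro h a ha y hy
    exact h ▸ ⟨a, ha, mem_closedBall.1 hy⟩
  · intro h
    refine Subset.antisymm ?_ fun y hy => ⟨y, hy, by simpa using hf y hy⟩
    rintro y ⟨a, ha, hya⟩
    exact h a ha hya

lemma b2bNat_iff {f : X → ℕ} :
    B2BNat f ↔ (∀ B, IsBounded B → (f '' B).Finite) ∧ ∀ n, IsBounded (f ⁻¹' {n}) := by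
  refine ⟨fun hf => ⟨fun B => (hf B).1, fun n => (hf _).2 ?_⟩, fun ⟨hfin, hfib⟩ B => ⟨hfin B, ?_⟩⟩
  · exact (finite_singleton n).subset (image_preimage_subset f _)
  · intro hB
    refine ((isBounded_biUnion hB).2 fun n _ => hfib n).subset ?_
    intro x hx
    exact mem_biUnion (mem_image_of_mem f hx) rfl

lemma B2BNat.isBounded_preimage_Iic {f : X → ℕ} (hf : B2BNat f) (N : ℕ) :
    IsBounded (f ⁻¹' Iic N) :=
  (hf _).2 ((finite_Iic N).subset (image_preimage_subset f _))

lemma fnbhd_inter_fnbhd_compl_subset {A : Set X} {f : X → ℝ}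
    (hf : ∀ a ∈ A, closedBall a (f a) ⊆ A) (ε : ℝ) :
    fnbhd A (fun _ => ε) ∩ fnbhd Aᶜ (fun _ => ε) ⊆ cthickening ε {a | f a ≤ 2 * ε} := by
  rintro x ⟨⟨a, ha, hxa⟩, ⟨b, hb, hxb⟩⟩
  have hfa : f a < dist b a := not_le.1 fun h => hb (hf a ha (mem_closedBall.2 h))
  refine mem_cthickening_of_dist_le x a ε _ ?_ hxa
  show f a ≤ 2 * ε
  linarith [dist_triangle_left b a x]

theorem isBounded_fnbhd_inter_fnbhd_compl {A : Set X} {f : X → ℕ} (hf : B2BNat f)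
    (hA : fnbhd A (fun x => (f x : ℝ)) = A) (ε : ℝ) :
    IsBounded (fnbhd A (fun _ => ε) ∩ fnbhd Aᶜ (fun _ => ε)) := by
  have hball := (fnbhd_eq_self_iff fun a _ => Nat.cast_nonneg (f a)).1 hA
  have hsub : {a | (f a : ℝ) ≤ 2 * ε} ⊆ f ⁻¹' Iic ⌈2 * ε⌉₊ := fun a (ha : (f a : ℝ) ≤ 2 * ε) => by
    exact_mod_cast ha.trans (Nat.le_ceil _)
  exact ((hf.isBounded_preimage_Iic _).subset hsub).cthickening.subset
    (fnbhd_inter_fnbhd_compl_subset hball ε)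

open Classical

noncomputable def ballDepth (A : Set X) (x₀ x : X) : ℕ :=
  Nat.findGreatest (fun n : ℕ => x ∈ A → closedBall x n ⊆ A) ⌊dist x x₀⌋₊

variable {A : Set X} {x₀ x : X}

lemma ballDepth_le_floor_dist : ballDepth A x₀ x ≤ ⌊dist x x₀⌋₊ :=
  Nat.findGreatest_le _

lemma closedBall_ballDepth_subset (hx : x ∈ A) : closedBall x (ballDepth A x₀ x) ⊆ A :=
  Nat.findGreatest_spec (P := fun n : ℕ => x ∈ A → closedBall x n ⊆ A) (Nat.zero_le _)
    (fun _ => by simpa using hx) hx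

lemma mem_fnbhd_inter_fnbhd_compl_of_ballDepth_lt (h : ballDepth A x₀ x < ⌊dist x x₀⌋₊) :
    x ∈ fnbhd A (fun _ => (ballDepth A x₀ x : ℝ) + 1) ∩
      fnbhd Aᶜ (fun _ => (ballDepth A x₀ x : ℝ) + 1) := by
  have hmax := Nat.findGreatest_is_greatest (Nat.lt_succ_self (ballDepth A x₀ x)) h
  obtain ⟨hx, hball⟩ := Classical.not_imp.1 hmax
  obtain ⟨b, hb, hbA⟩ := not_subset.1 hball
  refine ⟨⟨x, hx, by rw [dist_self]; positivity⟩, ⟨b, hbA, ?_⟩⟩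
  rw [dist_comm]
  exact_mod_cast mem_closedBall.1 hb

lemma isBounded_ballDepth_preimage_singleton
    (hA : ∀ ε : ℝ, 0 < ε → IsBounded (fnbhd A (fun _ => ε) ∩ fnbhd Aᶜ (fun _ => ε))) (n : ℕ) :
    IsBounded (ballDepth A x₀ ⁻¹' {n}) := by
  refine (isBounded_closedBall (x := x₀) (r := n + 1)).union (hA (n + 1) (by positivity))
    |>.subset ?_
  rintro x (rfl : ballDepth A x₀ x = n)
  rcases lt_or_ge (ballDepth A x₀ x) ⌊dist x x₀⌋₊ with h | h
  · exact Or.inr (mem_fnbhd_inter_fnbhd_compl_of_ballDepth_lt h)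
  · have hlt : dist x x₀ < ⌊dist x x₀⌋₊ + 1 := Nat.lt_floor_add_one _
    refine Or.inl (mem_closedBall.2 (hlt.le.trans ?_))
    exact_mod_cast Nat.add_le_add_right h 1

lemma finite_ballDepth_image {B : Set X} (hB : IsBounded B) : (ballDepth A x₀ '' B).Finite := by
  obtain ⟨r, hr⟩ := hB.subset_closedBall x₀
  refine (finite_Iic ⌊r⌋₊).subset ?_
  rintro _ ⟨x, hx, rfl⟩
  exact ballDepth_le_floor_dist.trans (Nat.floor_le_floor (mem_closedBall.1 (hr hx)))

lemma b2bNat_ballDepth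
    (hA : ∀ ε : ℝ, 0 < ε → IsBounded (fnbhd A (fun _ => ε) ∩ fnbhd Aᶜ (fun _ => ε))) :
    B2BNat (ballDepth A x₀) :=
  b2bNat_iff.2 ⟨fun _ => finite_ballDepth_image, isBounded_ballDepth_preimage_singleton hA⟩

lemma fnbhd_ballDepth : fnbhd A (fun x => (ballDepth A x₀ x : ℝ)) = A :=
  (fnbhd_eq_self_iff (f := fun x => (ballDepth A x₀ x : ℝ)) fun _ _ => Nat.cast_nonneg _).2
    fun _ => closedBall_ballDepth_subset

end

/-- A subset `A` of a metric space is asymptotically isolated (asymptotically disjoint from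
its complement) iff there is a bounded-to-bounded `f : X → ℕ` with `B(A,f) = A`. -/
theorem stmt4 {X : Type*} [MetricSpace X] (A : Set X) :
    (∀ ε : ℝ, 0 < ε →
        Bornology.IsBounded (fnbhd A (fun _ => ε) ∩ fnbhd Aᶜ (fun _ => ε))) ↔
    (∃ f : X → ℕ, B2BNat f ∧ fnbhd A (fun x => (f x : ℝ)) = A) := by
  refine ⟨fun h => ?_, fun ⟨f, hf, hA⟩ ε _ => isBounded_fnbhd_inter_fnbhd_compl hf hA ε⟩
  rcases isEmpty_or_nonempty X with _ | ⟨⟨x₀⟩⟩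
  · refine ⟨fun _ => 0, fun B => ?_, ?_⟩
    · simp [B.eq_empty_of_isEmpty]
    · ext x
      exact isEmptyElim x
  · exact ⟨ballDepth A x₀, b2bNat_ballDepth h, fnbhd_ballDepth⟩
end

section
/- A function φ: X → Y between metric spaces is boundedly oscillating if and only if there exists a bounded-to-bounded function ε: X → ω such that sup_{x∈X} diam φ(B(x, ε(x))) < ∞. -/
/-- `φ : X → Y` is boundedly oscillating: there is `D` such that for every `ε` there is a
bounded set `B` with `diam φ(B_ε(x)) ≤ D` for all `x ∉ B`. -/
def BoundedlyOsc {X Y : Type*} [MetricSpace X] [MetricSpace Y] (φ : X → Y) : Prop :=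
  ∃ D : ℝ, ∀ ε : ℝ, ∃ B : Set X, Bornology.IsBounded B ∧
    ∀ x ∉ B, ∀ y ∈ φ '' Metric.closedBall x ε, ∀ z ∈ φ '' Metric.closedBall x ε,
      dist y z ≤ D

open Metric Bornology

section LevelIndex

variable {X : Type*} [MetricSpace X]

lemma Bornology.IsBounded.exists_nat_ge_subset_closedBall {s : Set X} (hs : IsBounded s)
    (x₀ : X) (n : ℕ) : ∃ R : ℕ, n ≤ R ∧ s ⊆ closedBall x₀ R := by
  obtain ⟨r, hnr, hr⟩ := hs.subset_closedBall_lt n x₀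
  exact ⟨⌈r⌉₊, (Nat.lt_ceil.2 hnr).le, hr.trans (closedBall_subset_closedBall (Nat.le_ceil r))⟩

lemma B2BNat.isBounded_setOf_le_s5 {ε : X → ℕ} (hε : B2BNat ε) (n : ℕ) :
    IsBounded {x | ε x ≤ n} :=
  (hε _).2 ((Set.finite_Iic n).subset (Set.image_subset_iff.2 fun _ hx => hx))

noncomputable def levelIndex (R : ℕ → ℕ) (x₀ x : X) : ℕ :=
  Nat.findGreatest (fun n => (R n : ℝ) < dist x x₀) ⌈dist x x₀⌉₊

variable {R : ℕ → ℕ} {x₀ x : X} {n : ℕ}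

lemma levelIndex_le_ceil_dist : levelIndex R x₀ x ≤ ⌈dist x x₀⌉₊ :=
  Nat.findGreatest_le _

lemma le_levelIndex (hR : ∀ n, n ≤ R n) (h : (R n : ℝ) < dist x x₀) : n ≤ levelIndex R x₀ x :=
  Nat.le_findGreatest (Nat.lt_ceil.2 (lt_of_le_of_lt (by exact_mod_cast hR n) h)).le h

lemma dist_lt_of_levelIndex_ne_zero (h : levelIndex R x₀ x ≠ 0) :
    (R (levelIndex R x₀ x) : ℝ) < dist x x₀ :=
  Nat.findGreatest_of_ne_zero rfl h

lemma b2bNat_levelIndex (hR : ∀ n, n ≤ R n) (x₀ : X) : B2BNat (levelIndex R x₀) := by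
  intro A
  constructor
  · intro hA
    obtain ⟨M, hM⟩ := hA.subset_closedBall x₀
    refine (Set.finite_Iic ⌈M⌉₊).subset ?_
    rintro _ ⟨x, hx, rfl⟩
    exact levelIndex_le_ceil_dist.trans (Nat.ceil_mono (hM hx))
  · intro hfin
    obtain ⟨N, hN⟩ := hfin.bddAbove
    refine (isBounded_closedBall (x := x₀) (r := R (N + 1))).subset fun x hx => ?_
    by_contra hout
    have hle := le_levelIndex hR (not_le.1 hout)
    have hge := hN ⟨x, hx, rfl⟩
    omega

end LevelIndex

section Oscillation

variable {X Y : Type*} [MetricSpace X] [MetricSpace Y] {φ : X → Y}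

theorem boundedlyOsc_of_b2bNat {ε : X → ℕ} (hε : B2BNat ε) {C : ℝ}
    (hC : ∀ x, ∀ y ∈ φ '' closedBall x (ε x), ∀ z ∈ φ '' closedBall x (ε x), dist y z ≤ C) :
    BoundedlyOsc φ := by
  refine ⟨C, fun r => ⟨{x | ε x ≤ ⌈r⌉₊}, hε.isBounded_setOf_le_s5 _, fun x hx y hy z hz => ?_⟩⟩
  have hr : r ≤ ε x := (Nat.le_ceil r).trans (by exact_mod_cast (not_le.1 hx).le)
  have hsub : φ '' closedBall x r ⊆ φ '' closedBall x (ε x) :=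
    Set.image_mono (closedBall_subset_closedBall hr)
  exact hC x y (hsub hy) z (hsub hz)

theorem BoundedlyOsc.exists_b2bNat (h : BoundedlyOsc φ) :
    ∃ ε : X → ℕ, B2BNat ε ∧ ∃ C : ℝ, ∀ x : X,
      ∀ y ∈ φ '' closedBall x (ε x), ∀ z ∈ φ '' closedBall x (ε x), dist y z ≤ C := by
  obtain ⟨D, hD⟩ := h
  rcases isEmpty_or_nonempty X with hX | ⟨⟨x₀⟩⟩
  · exact ⟨fun _ => 0, fun A => by simp [A.eq_empty_of_isEmpty], 0, isEmptyElim⟩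
  choose B hBbd hB using fun n : ℕ => hD n
  choose R hRn hRB using fun n => (hBbd n).exists_nat_ge_subset_closedBall x₀ n
  refine ⟨levelIndex R x₀, b2bNat_levelIndex hRn x₀, max D 0, fun x => ?_⟩
  by_cases h0 : levelIndex R x₀ x = 0
  · rw [h0, Nat.cast_zero, closedBall_zero, Set.image_singleton]
    rintro y rfl z rfl
    simp
  · have hxB : x ∉ B (levelIndex R x₀ x) := fun hx =>
      (dist_lt_of_levelIndex_ne_zero h0).not_ge (hRB _ hx)
    intro y hy z hz
    exact (hB _ x hxB y hy z hz).trans (le_max_left _ _)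

end Oscillation

/-- `φ : X → Y` is boundedly oscillating iff there is a bounded-to-bounded `ε : X → ℕ`
with `sup_x diam φ(B(x, ε x)) < ∞`. -/
theorem stmt5 {X Y : Type*} [MetricSpace X] [MetricSpace Y] (φ : X → Y) :
    BoundedlyOsc φ ↔
    ∃ ε : X → ℕ, B2BNat ε ∧ ∃ C : ℝ, ∀ x : X,
      ∀ y ∈ φ '' Metric.closedBall x (ε x), ∀ z ∈ φ '' Metric.closedBall x (ε x),
        dist y z ≤ C :=
  ⟨BoundedlyOsc.exists_b2bNat, fun ⟨_, hε, _, hC⟩ => boundedlyOsc_of_b2bNat hε hC⟩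
end

section
/- For every metric space X there exists a boundedly oscillating bounded-to-bounded function φ: X → ω. Concretely, fixing x₀ ∈ X and an increasing sequence of reals (r_n)_{n∈ω} with r₀ < 0 and r_{n+1} − r_n → ∞, the function φ defined by φ⁻¹(n) = B_{r_{n+1}}(x₀) \ B_{r_n}(x₀) is boundedly oscillating and bounded-to-bounded. -/
open Filter Metric

theorem tendsto_atTop_of_monotone_of_tendsto_sub {r : ℕ → ℝ} (hmono : Monotone r)
    (hgap : Tendsto (fun n => r (n + 1) - r n) atTop atTop) : Tendsto r atTop atTop := by
  refine (tendsto_add_atTop_iff_nat 1).1 <| tendsto_atTop_mono (fun n => ?_)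
    (tendsto_atTop_add_const_right _ (r 0) hgap)
  have := hmono (Nat.zero_le n)
  linarith

section Shells

variable {X : Type*} [MetricSpace X] {x₀ : X} {r : ℕ → ℝ} {φ : X → ℕ}

theorem lt_dist_and_dist_le_of_preimage_eq
    (hφ : ∀ n, φ ⁻¹' {n} = closedBall x₀ (r (n + 1)) \ closedBall x₀ (r n)) (x : X) :
    r (φ x) < dist x x₀ ∧ dist x x₀ ≤ r (φ x + 1) := by
  have hx : x ∈ φ ⁻¹' {φ x} := rfl
  rw [hφ, Set.mem_sdiff, mem_closedBall, mem_closedBall, not_le] at hx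
  exact hx.symm

variable (hφ : ∀ x, r (φ x) < dist x x₀ ∧ dist x x₀ ≤ r (φ x + 1)) (hmono : Monotone r)
include hφ hmono

theorem le_of_lt_dist {N : ℕ} {x : X} (hx : r N < dist x x₀) : N ≤ φ x := by
  by_contra! h
  linarith [(hφ x).2, hmono (Nat.succ_le_of_lt h)]

theorem lt_of_dist_le {N : ℕ} {R : ℝ} {x : X} (hx : dist x x₀ ≤ R) (hR : R < r N) : φ x < N := by
  by_contra! h
  linarith [(hφ x).1, hmono h]

theorem le_add_one_of_dist_le {x y : X} {δ : ℝ} (hxy : dist y x₀ ≤ dist x x₀ + δ)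
    (hδ : δ < r (φ x + 2) - r (φ x + 1)) : φ y ≤ φ x + 1 := by
  by_contra! h
  linarith [(hφ x).2, (hφ y).1, hmono (Nat.succ_le_of_lt h)]

theorem dist_le_one_of_abs_sub_le {N : ℕ} {x y : X} {δ : ℝ}
    (hgap : ∀ n ≥ N, δ < r (n + 1) - r n) (hx : N ≤ φ x) (hy : N ≤ φ y)
    (hxy : |dist y x₀ - dist x x₀| ≤ δ) : dist (φ y) (φ x) ≤ 1 := by
  rw [abs_le] at hxy
  have hyx : φ y ≤ φ x + 1 :=
    le_add_one_of_dist_le hφ hmono (by linarith) (hgap (φ x + 1) (by omega))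
  have hxy : φ x ≤ φ y + 1 :=
    le_add_one_of_dist_le hφ hmono (by linarith) (hgap (φ y + 1) (by omega))
  rw [Nat.dist_eq, abs_le]
  constructor <;> push_cast [← Nat.cast_le (α := ℝ)] at hyx hxy <;> linarith

theorem boundedlyOsc_of_mem_shell (hgap : Tendsto (fun n => r (n + 1) - r n) atTop atTop) :
    BoundedlyOsc φ := by
  refine ⟨2, fun ε => ?_⟩
  obtain ⟨N, hN⟩ := (hgap.eventually_gt_atTop |ε|).exists_forall_of_atTop
  refine ⟨closedBall x₀ (r N + |ε|), isBounded_closedBall, fun x hx => ?_⟩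
  rw [mem_closedBall, not_le] at hx
  have hnear : ∀ y ∈ closedBall x ε, |dist y x₀ - dist x x₀| ≤ |ε| := fun y hy =>
    (abs_dist_sub_le y x x₀).trans ((mem_closedBall.1 hy).trans (le_abs_self ε))
  have hfar : ∀ y ∈ closedBall x ε, N ≤ φ y := fun y hy =>
    le_of_lt_dist hφ hmono (by linarith [abs_le.1 (hnear y hy)])
  have hxN : N ≤ φ x := le_of_lt_dist hφ hmono (by linarith [abs_nonneg ε])
  rintro _ ⟨y, hy, rfl⟩ _ ⟨z, hz, rfl⟩
  calc dist (φ y) (φ z) ≤ dist (φ y) (φ x) + dist (φ z) (φ x) := dist_triangle_right _ _ _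
    _ ≤ 1 + 1 := add_le_add
        (dist_le_one_of_abs_sub_le hφ hmono hN hxN (hfar y hy) (hnear y hy))
        (dist_le_one_of_abs_sub_le hφ hmono hN hxN (hfar z hz) (hnear z hz))
    _ = 2 := one_add_one_eq_two

theorem b2bNat_of_mem_shell (hr : Tendsto r atTop atTop) : B2BNat φ := by
  refine fun B => ⟨fun hB => ?_, fun hfin => ?_⟩
  · obtain ⟨R, hR⟩ := (isBounded_iff_subset_closedBall x₀).1 hB
    obtain ⟨N, hN⟩ := (hr.eventually_gt_atTop R).exists
    refine (Set.finite_Iio N).subset ?_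
    rintro _ ⟨x, hx, rfl⟩
    exact lt_of_dist_le hφ hmono (hR hx) hN
  · obtain ⟨N, hN⟩ := hfin.bddAbove
    exact (isBounded_closedBall (x := x₀) (r := r (N + 1))).subset fun x hx =>
      (hφ x).2.trans (hmono (Nat.succ_le_succ (hN ⟨x, hx, rfl⟩)))

end Shells

theorem stmt6_general {X : Type*} [MetricSpace X] (x₀ : X) (r : ℕ → ℝ)
    (hmono : StrictMono r)
    (hgap : Filter.Tendsto (fun n => r (n + 1) - r n) Filter.atTop Filter.atTop)
    (φ : X → ℕ)
    (hφ : ∀ n : ℕ,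
      φ ⁻¹' {n} = Metric.closedBall x₀ (r (n + 1)) \ Metric.closedBall x₀ (r n)) :
    BoundedlyOsc φ ∧ B2BNat φ := by
  have hshell := lt_dist_and_dist_le_of_preimage_eq hφ
  exact ⟨boundedlyOsc_of_mem_shell hshell hmono.monotone hgap,
    b2bNat_of_mem_shell hshell hmono.monotone
      (tendsto_atTop_of_monotone_of_tendsto_sub hmono.monotone hgap)⟩

/-- Fix `x₀ ∈ X` and an increasing sequence of reals `(r n)` with `r 0 < 0` and
`r (n+1) - r n → ∞`.  The function `φ : X → ℕ` defined by
`φ ⁻¹' {n} = B_{r (n+1)}(x₀) \ B_{r n}(x₀)` is boundedly oscillating and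
bounded-to-bounded. -/
theorem stmt6 {X : Type*} [MetricSpace X] (x₀ : X) (r : ℕ → ℝ)
    (hmono : StrictMono r) (hr0 : r 0 < 0)
    (hgap : Filter.Tendsto (fun n => r (n + 1) - r n) Filter.atTop Filter.atTop)
    (φ : X → ℕ)
    (hφ : ∀ n : ℕ,
      φ ⁻¹' {n} = Metric.closedBall x₀ (r (n + 1)) \ Metric.closedBall x₀ (r n)) :
    BoundedlyOsc φ ∧ B2BNat φ :=
  stmt6_general x₀ r hmono hgap φ hφ
end

section
/- A bounded-to-bounded function f: X → Y between metric spaces is coarse (for every δ < ∞ there is ε < ∞ such that d_X(x,x') ≤ δ implies d_Y(f(x),f(x')) ≤ ε) if and only if for every bounded-to-bounded ε: Y → ω there exists a bounded-to-bounded δ: X → ω such that f(B(x, δ(x))) ⊆ B(f(x), ε(f(x))) for all x ∈ X. -/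
def B2B {X Y : Type*} [MetricSpace X] [MetricSpace Y] (f : X → Y) : Prop :=
  ∀ B : Set X, Bornology.IsBounded B ↔ Bornology.IsBounded (f '' B)

open Metric Bornology Set

theorem Set.Finite.image_of_le {α : Type*} {e δ : α → ℕ} (hδe : ∀ x, δ x ≤ e x) {B : Set α}
    (he : (e '' B).Finite) : (δ '' B).Finite := by
  obtain ⟨M, hM⟩ := he.bddAbove
  refine (finite_Iic M).subset ?_
  rintro _ ⟨x, hx, rfl⟩
  exact (hδe x).trans (hM (mem_image_of_mem e hx))

section

variable {X Y : Type*} [MetricSpace X] [MetricSpace Y]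

def IsCoarse (f : X → Y) : Prop :=
  ∀ δ : ℝ, ∃ ε : ℝ, ∀ x x' : X, dist x x' ≤ δ → dist (f x) (f x') ≤ ε

theorem B2BNat.comp {f : X → Y} (hf : B2B f) {ε : Y → ℕ} (hε : B2BNat ε) : B2BNat (ε ∘ f) :=
  fun B => by rw [hf B, hε, image_comp]

theorem b2bNat_ceil_dist (y₀ : Y) : B2BNat fun y => ⌈dist y₀ y⌉₊ := by
  intro B
  rw [isBounded_iff_subset_closedBall y₀]
  constructor
  · rintro ⟨R, hR⟩
    refine (finite_Iic ⌈R⌉₊).subset ?_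
    rintro _ ⟨y, hy, rfl⟩
    exact Nat.ceil_mono (dist_comm y₀ y ▸ mem_closedBall.1 (hR hy))
  · intro hB
    obtain ⟨M, hM⟩ := hB.bddAbove
    refine ⟨M, fun y hy => mem_closedBall.2 ?_⟩
    rw [dist_comm]
    exact Nat.ceil_le.1 (hM (mem_image_of_mem _ hy))

theorem B2BNat.of_le_of_le_comp {e δ : X → ℕ} (he : B2BNat e) (hδe : ∀ x, δ x ≤ e x)
    (g : ℕ → ℕ) (heδ : ∀ x, e x ≤ g (δ x)) : B2BNat δ := by
  intro B
  rw [he B]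
  refine ⟨Set.Finite.image_of_le hδe, fun hδ => ?_⟩
  obtain ⟨M, hM⟩ := (hδ.image g).bddAbove
  refine (finite_Iic M).subset ?_
  rintro _ ⟨x, hx, rfl⟩
  exact (heδ x).trans (hM (mem_image_of_mem g (mem_image_of_mem δ hx)))

theorem B2BNat.exists_le_of_seq {e : Y → ℕ} (he : B2BNat e) (y : ℕ → Y) :
    ∃ ε : Y → ℕ, B2BNat ε ∧ ∀ m, ε (y m) ≤ m := by
  -- the set always contains `e z`, so the junk value `sInf ∅ = 0` never occurs
  set ε : Y → ℕ := fun z => sInf (insert (e z) {m | y m = z})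
  refine ⟨ε, fun B => ⟨fun hB => ?_, fun hεB => ?_⟩, fun m => Nat.sInf_le (Or.inr rfl)⟩
  · exact ((he B).1 hB).image_of_le fun z => Nat.sInf_le (mem_insert _ _)
  · obtain ⟨k, hk⟩ := hεB.bddAbove
    have hsub : B ⊆ {z ∈ B | e z ≤ k} ∪ y '' Iic k := by
      intro z hz
      have hεz : ε z ≤ k := hk (mem_image_of_mem ε hz)
      rcases Nat.sInf_mem (insert_nonempty (e z) {m | y m = z}) with h | h
      · exact Or.inl ⟨hz, h ▸ hεz⟩
      · exact Or.inr ⟨ε z, hεz, h⟩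
    refine IsBounded.subset (IsBounded.union ?_ ((finite_Iic k).image y).isBounded) hsub
    refine (he _).2 ((finite_Iic k).subset ?_)
    rintro _ ⟨z, hz, rfl⟩
    exact hz.2

theorem IsCoarse.exists_b2bNat_image_closedBall_subset {f : X → Y} (hf : IsCoarse f)
    {ε : Y → ℕ} (hε : B2BNat (ε ∘ f)) :
    ∃ δ : X → ℕ, B2BNat δ ∧ ∀ x, f '' closedBall x (δ x) ⊆ closedBall (f x) (ε (f x)) := by
  choose c hc using fun n : ℕ => hf n
  set δ : X → ℕ := fun x => Nat.findGreatest (fun n => c n ≤ ε (f x)) (ε (f x))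
  refine ⟨δ, hε.of_le_of_le_comp (fun x => Nat.findGreatest_le _)
    (fun n => max (n + 1) ⌈c (n + 1)⌉₊) fun x => ?_, ?_⟩
  · by_contra! h
    have hnext : δ x + 1 ≤ δ x := Nat.le_findGreatest ((le_max_left _ _).trans h.le)
      (Nat.ceil_le.1 (le_of_max_le_right h.le))
    omega
  · rintro x _ ⟨x', hx', rfl⟩
    rw [mem_closedBall, dist_comm]
    rcases eq_or_ne (δ x) 0 with h0 | h0
    · rw [mem_closedBall, h0, Nat.cast_zero, dist_le_zero] at hx'
      rw [hx', dist_self]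
      positivity
    · exact (hc (δ x) x x' (dist_comm x' x ▸ hx')).trans (Nat.findGreatest_of_ne_zero rfl h0)

theorem isCoarse_of_forall_b2bNat {f : X → Y}
    (hf : ∀ B : Set X, IsBounded B → IsBounded (f '' B))
    (h : ∀ ε : Y → ℕ, B2BNat ε → ∃ δ : X → ℕ, B2BNat δ ∧
      ∀ x, f '' closedBall x (δ x) ⊆ closedBall (f x) (ε (f x))) :
    IsCoarse f := by
  intro r
  by_contra! hr
  choose a b hab hfab using fun m : ℕ => hr m
  obtain ⟨ε, hε, hεa⟩ := (b2bNat_ceil_dist (f (a 0))).exists_le_of_seq (f ∘ a)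
  obtain ⟨δ, hδ, hball⟩ := h ε hε
  have hδa : ∀ m, (δ (a m) : ℝ) < r := by
    intro m
    by_contra! hm
    have hbm : b m ∈ closedBall (a m) (δ (a m)) :=
      mem_closedBall.2 ((dist_comm (b m) (a m)).trans_le (hab m) |>.trans hm)
    have hfbm := mem_closedBall.1 (hball (a m) (mem_image_of_mem f hbm))
    rw [dist_comm] at hfbm
    exact (hfab m).not_ge (hfbm.trans (by exact_mod_cast hεa m))
  have ha : IsBounded (range a) := by
    refine (hδ _).2 ((finite_Iic ⌈r⌉₊).subset ?_)
    rintro _ ⟨_, ⟨m, rfl⟩, rfl⟩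
    exact Nat.cast_le.1 ((hδa m).le.trans (Nat.le_ceil r))
  have hb : range b ⊆ cthickening r (range a) := by
    rintro _ ⟨m, rfl⟩
    exact mem_cthickening_of_dist_le _ _ _ _ (mem_range_self m) (dist_comm (b m) (a m) ▸ hab m)
  have hfab_bdd := hf _ (ha.union (ha.cthickening.subset hb))
  set m := ⌈diam (f '' (range a ∪ range b))⌉₊
  refine (hfab m).not_ge ((dist_le_diam_of_mem hfab_bdd ?_ ?_).trans (Nat.le_ceil _))
  · exact mem_image_of_mem f (Or.inl (mem_range_self m))
  · exact mem_image_of_mem f (Or.inr (mem_range_self m))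

end

/-- A bounded-to-bounded `f : X → Y` is coarse iff for every bounded-to-bounded
`ε : Y → ℕ` there is a bounded-to-bounded `δ : X → ℕ` with
`f(B(x, δ x)) ⊆ B(f x, ε (f x))` for all `x`. -/
theorem stmt8 {X Y : Type*} [MetricSpace X] [MetricSpace Y]
    (f : X → Y) (hf : B2B f) :
    (∀ δ : ℝ, ∃ ε : ℝ, ∀ x x' : X, dist x x' ≤ δ → dist (f x) (f x') ≤ ε) ↔
    (∀ ε : Y → ℕ, B2BNat ε → ∃ δ : X → ℕ, B2BNat δ ∧
      ∀ x : X, f '' Metric.closedBall x (δ x) ⊆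
        Metric.closedBall (f x) (ε (f x))) :=
  ⟨fun hc _ hε => IsCoarse.exists_b2bNat_image_closedBall_subset hc (hε.comp hf),
    isCoarse_of_forall_b2bNat fun B => (hf B).1⟩
end

section
/- Let X be an unbounded metric space such that for some ε < ∞ the ε-components have unbounded diameters: sup_{x∈X} diam C_ε(x) = ∞. Fix θ ∈ X. Then there exists a sequence (C_n)_{n∈ω} of bounded ε-connected subsets of X such that diam C_n > n and dist(C_n, C_{<n}) ≥ n for every n, where C_{<n} = B_n(θ) ∪ ⋃_{k<n} C_k. -/
/-!
Choose the sets one at a time, each outside a ball containing everything chosen so far. For a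
given radius `M`, take an `ε`-chain whose endpoints are much farther apart than `M`; one endpoint
is then far from `θ`. The final stretch of the chain after it last leaves the ball `B_M(θ)` is a
finite `ε`-connected set outside that ball. Either this stretch is the whole chain, or it starts
within `M + ε` of `θ`; in both cases its diameter is large.
-/

open Relation Metric Bornology

/-- The `ε`-component of `x`: all points linkable to `x` by an `ε`-chain. -/
def epsComp {X : Type*} [MetricSpace X] (ε : ℝ) (x : X) : Set X :=
  {y | Relation.ReflTransGen (fun a b => dist a b ≤ ε) x y}

theorem List.IsChain.reflTransGen_of_mem {α : Type*} {r : α → α → Prop} [Std.Symm r]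
    {l : List α} (hl : l.IsChain r) {a b : α} (ha : a ∈ l) (hb : b ∈ l) :
    ReflTransGen (fun x y => x ∈ l ∧ y ∈ l ∧ r x y) a b := by
  cases l with
  | nil => simp at ha
  | cons c t =>
    have : Std.Symm fun x y => x ∈ c :: t ∧ y ∈ c :: t ∧ r x y :=
      ⟨fun _ _ ⟨hx, hy, hxy⟩ => ⟨hy, hx, symm hxy⟩⟩
    have hfrom : ∀ p ∈ c :: t, ReflTransGen (fun x y => x ∈ c :: t ∧ y ∈ c :: t ∧ r x y) c p :=
      (hl.imp_of_mem_imp fun _ _ hx hy hxy => ⟨hx, hy, hxy⟩).induction _ _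
        (fun _ _ hxy h => h.tail hxy) fun _ => .refl
    exact (symm (hfrom a ha)).trans (hfrom b hb)

theorem Relation.ReflTransGen.exists_isChain_after_last_entry {α : Type*} {r : α → α → Prop}
    (P : α → Prop) {u v : α} (h : ReflTransGen r u v) (hv : P v) :
    ∃ w l, (w :: l).IsChain r ∧ v ∈ w :: l ∧ (∀ p ∈ w :: l, P p) ∧
      (w = u ∨ ∃ x, ¬ P x ∧ r x w) := by
  induction h using ReflTransGen.head_induction_on with
  | refl => exact ⟨v, [], .singleton v, List.mem_singleton_self v, by simpa, Or.inl rfl⟩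
  | @head a b hab _ ih =>
    obtain ⟨w, l, hchain, hv, hP, rfl | hentry⟩ := ih
    · by_cases ha : P a
      · exact ⟨a, w :: l, hchain.cons_cons hab, List.mem_cons_of_mem _ hv,
          List.forall_mem_cons.2 ⟨ha, hP⟩, Or.inl rfl⟩
      · exact ⟨w, l, hchain, hv, hP, Or.inr ⟨a, ha, hab⟩⟩
    · exact ⟨w, l, hchain, hv, hP, Or.inr hentry⟩

section PseudoMetric

variable {X : Type*} [PseudoMetricSpace X]

def EpsConnected (ε : ℝ) (C : Set X) : Prop :=
  ∀ y ∈ C, ∀ z ∈ C, ReflTransGen (fun a b => a ∈ C ∧ b ∈ C ∧ dist a b ≤ ε) y z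

instance (ε : ℝ) : Std.Symm fun a b : X => dist a b ≤ ε :=
  ⟨fun a b (hab : dist a b ≤ ε) => (dist_comm b a).trans_le hab⟩

theorem List.IsChain.epsConnected {ε : ℝ} {l : List X}
    (hl : l.IsChain fun a b => dist a b ≤ ε) : EpsConnected ε {p | p ∈ l} :=
  fun _ hy _ hz => hl.reflTransGen_of_mem hy hz

theorem exists_reflTransGen_far_from {ε : ℝ}
    (hfar : ∀ D, ∃ y z, ReflTransGen (fun a b : X => dist a b ≤ ε) y z ∧ D < dist y z)
    (θ : X) (T : ℝ) :
    ∃ u v, ReflTransGen (fun a b : X => dist a b ≤ ε) u v ∧ 2 * T < dist u v ∧ T < dist v θ := by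
  obtain ⟨y, z, hyz, hdist⟩ := hfar (2 * T)
  by_cases hz : T < dist z θ
  · exact ⟨y, z, hyz, hdist, hz⟩
  · refine ⟨z, y, symm hyz, by rwa [dist_comm], ?_⟩
    linarith [dist_triangle_right y z θ]

theorem exists_epsConnected_outside_closedBall {ε : ℝ}
    (hfar : ∀ D, ∃ y z, ReflTransGen (fun a b : X => dist a b ≤ ε) y z ∧ D < dist y z)
    (θ : X) {d : ℝ} (hd : 0 ≤ d) (M : ℝ) :
    ∃ C : Set X, IsBounded C ∧ EpsConnected ε C ∧ (∃ y ∈ C, ∃ z ∈ C, d < dist y z) ∧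
      ∀ a ∈ C, M < dist a θ := by
  obtain ⟨u, v, huv, hduv, hvθ⟩ := exists_reflTransGen_far_from hfar θ (|M| + d + |ε| + 1)
  obtain ⟨w, l, hchain, hv, hout, hentry⟩ := huv.exists_isChain_after_last_entry
    (fun p => M < dist p θ) (by linarith [le_abs_self M, abs_nonneg ε])
  refine ⟨{p | p ∈ w :: l}, (w :: l).finite_toSet.isBounded, hchain.epsConnected,
    ⟨w, List.mem_cons_self, v, hv, ?_⟩, hout⟩
  rcases hentry with rfl | ⟨x, hx, hxw⟩
  · linarith [abs_nonneg M, abs_nonneg ε]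
  · have hwθ : dist w θ ≤ M + ε := by linarith [dist_triangle_left w θ x, not_lt.1 hx]
    linarith [dist_triangle_left v θ w, le_abs_self M, le_abs_self ε]

theorem exists_seq_separated {P : ℕ → Set X → Prop} (θ : X)
    (hP : ∀ (n : ℕ) (M : ℝ), ∃ C, IsBounded C ∧ P n C ∧ ∀ a ∈ C, M < dist a θ) :
    ∃ C : ℕ → Set X, (∀ n, IsBounded (C n)) ∧ (∀ n, P n (C n)) ∧
      ∀ n : ℕ, ∀ a ∈ C n, ∀ b ∈ closedBall θ (n : ℝ) ∪ ⋃ k ∈ {k | k < n}, C k,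
        (n : ℝ) ≤ dist a b := by
  choose G hGb hGP hGfar using hP
  choose ρ hρ using fun n M => (hGb n M).subset_closedBall θ
  -- `R n` bounds `n` and the radii of the sets chosen before step `n`.
  obtain ⟨R, hR0, hRsucc⟩ : ∃ R : ℕ → ℝ, R 0 = 0 ∧
      ∀ k, R (k + 1) = max (R k + 1) (ρ k (R k + k)) :=
    ⟨fun n => Nat.rec 0 (fun k r => max (r + 1) (ρ k (r + k))) n, rfl, fun _ => rfl⟩
  have hR_mono : Monotone R :=
    monotone_nat_of_le_succ fun k => by
      rw [hRsucc]; linarith [le_max_left (R k + 1) (ρ k (R k + k))]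
  have hn_le_R : ∀ n : ℕ, (n : ℝ) ≤ R n := by
    intro n
    induction n with
    | zero => simp [hR0]
    | succ k ih =>
      rw [hRsucc]; push_cast; linarith [le_max_left (R k + 1) (ρ k (R k + k))]
  refine ⟨fun n => G n (R n + n), fun n => hGb _ _, fun n => hGP _ _, ?_⟩
  intro n a ha b hb
  have hbθ : dist b θ ≤ R n := by
    rcases hb with hb | hb
    · exact (mem_closedBall.1 hb).trans (hn_le_R n)
    · obtain ⟨k, hk, hb⟩ := Set.mem_iUnion₂.1 hb
      calc dist b θ ≤ ρ k (R k + k) := hρ k _ hb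
        _ ≤ R (k + 1) := by rw [hRsucc]; exact le_max_right _ _
        _ ≤ R n := hR_mono hk
  linarith [hGfar n (R n + n) a ha, dist_triangle a b θ]

end PseudoMetric

theorem stmt10_general {X : Type*} [MetricSpace X]
    (ε : ℝ)
    (h : ∀ D : ℝ, ∃ x : X, ∃ y ∈ epsComp ε x, ∃ z ∈ epsComp ε x, D < dist y z)
    (θ : X) :
    ∃ C : ℕ → Set X,
      (∀ n, Bornology.IsBounded (C n)) ∧
      (∀ n, ∀ y ∈ C n, ∀ z ∈ C n,
        Relation.ReflTransGen (fun a b => a ∈ C n ∧ b ∈ C n ∧ dist a b ≤ ε) y z) ∧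
      (∀ n : ℕ, ∃ y ∈ C n, ∃ z ∈ C n, (n : ℝ) < dist y z) ∧
      (∀ n : ℕ, ∀ a ∈ C n,
        ∀ b ∈ (Metric.closedBall θ (n : ℝ) ∪ ⋃ k ∈ {k | k < n}, C k),
          (n : ℝ) ≤ dist a b) := by
  have hfar : ∀ D, ∃ y z, ReflTransGen (fun a b : X => dist a b ≤ ε) y z ∧ D < dist y z := by
    intro D
    obtain ⟨x, y, hy, z, hz, hyz⟩ := h D
    exact ⟨y, z, (symm hy).trans hz, hyz⟩
  obtain ⟨C, hC_bdd, hC, hC_sep⟩ := exists_seq_separated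
    (P := fun n C => EpsConnected ε C ∧ ∃ y ∈ C, ∃ z ∈ C, (n : ℝ) < dist y z) θ fun n M => by
      obtain ⟨C, hbdd, hconn, hdiam, hout⟩ :=
        exists_epsConnected_outside_closedBall hfar θ n.cast_nonneg M
      exact ⟨C, hbdd, ⟨hconn, hdiam⟩, hout⟩
  exact ⟨C, hC_bdd, fun n => (hC n).1, fun n => (hC n).2, hC_sep⟩

/-- If the `ε`-components of an unbounded metric space have unbounded diameters, then
there is a sequence `(C n)` of bounded `ε`-connected sets with `diam (C n) > n` and
`dist (C n, C_{<n}) ≥ n`, where `C_{<n} = B_n(θ) ∪ ⋃_{k<n} C k`. -/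
theorem stmt10 {X : Type*} [MetricSpace X]
    (hX : ¬ Bornology.IsBounded (Set.univ : Set X)) (ε : ℝ)
    (h : ∀ D : ℝ, ∃ x : X, ∃ y ∈ epsComp ε x, ∃ z ∈ epsComp ε x, D < dist y z)
    (θ : X) :
    ∃ C : ℕ → Set X,
      (∀ n, Bornology.IsBounded (C n)) ∧
      (∀ n, ∀ y ∈ C n, ∀ z ∈ C n,
        Relation.ReflTransGen (fun a b => a ∈ C n ∧ b ∈ C n ∧ dist a b ≤ ε) y z) ∧
      (∀ n : ℕ, ∃ y ∈ C n, ∃ z ∈ C n, (n : ℝ) < dist y z) ∧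
      (∀ n : ℕ, ∀ a ∈ C n,
        ∀ b ∈ (Metric.closedBall θ (n : ℝ) ∪ ⋃ k ∈ {k | k < n}, C k),
          (n : ℝ) ≤ dist a b) :=
  stmt10_general ε h θ
end

section
/- Let (X,d) be an unbounded metric space with asymptotically isolated balls: there is ε > 0 such that for every finite δ ≥ ε there is x ∈ X with B_ε(x) = B_δ(x). Fix such ε. Then there exist an increasing sequence of reals (δ_n) and points (x_n)_{n∈ω} in X such that for all n: δ_n ≥ (n+2)ε, B_{δ_n − ε}(x_k) ⊄ B_{2ε}(x_k) for all k < n, and B_{δ_n}(x_n) = B_ε(x_n); moreover, these conditions imply d(x_k, x_n) ≥ δ_n for all k < n. -/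
/-!
Let `R y` be a radius with `B_R(y) ⊄ B_{2ε}(y)`, which exists because `X` is unbounded. Build `δ`
recursively by `δ (n+1) = max (δ n) (R (x n)) + ε`, where `x n` is a centre with
`B_{δ n}(x n) = B_ε(x n)`. Then `B_{δ n - ε}(x k)` contains `B_{R (x k)}(x k)` for `k < n`, and if
`x k` were within `δ n` of `x n` it would lie in `B_ε(x n)`; the triangle inequality would then put all
of `B_{δ n - ε}(x k)` inside `B_ε(x n)` and hence inside `B_{2ε}(x k)`.
-/

open Metric

theorem exists_closedBall_not_subset_closedBall {X : Type*} [PseudoMetricSpace X]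
    (hX : ¬ Bornology.IsBounded (Set.univ : Set X)) (x : X) (r : ℝ) :
    ∃ R, ¬ closedBall x R ⊆ closedBall x r := by
  by_contra! h
  exact hX <| isBounded_closedBall.subset fun y _ ↦ h (dist y x) (mem_closedBall.2 le_rfl)

theorem le_dist_of_closedBall_eq_of_not_subset {X : Type*} [PseudoMetricSpace X] {x y : X}
    {ε δ : ℝ} (hx : closedBall x δ = closedBall x ε)
    (hy : ¬ closedBall y (δ - ε) ⊆ closedBall y (2 * ε)) : δ ≤ dist y x := by
  by_contra! hyx
  have hyx' : dist y x ≤ ε := mem_closedBall.1 (hx ▸ mem_closedBall.2 hyx.le)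
  refine hy fun z hz ↦ mem_closedBall.2 ?_
  have hzx : dist z x ≤ ε := by
    rw [← mem_closedBall, ← hx, mem_closedBall]
    linarith [dist_triangle z y x, mem_closedBall.1 hz]
  linarith [dist_triangle z x y, dist_comm x y]

theorem exists_strictMono_apply_add_le_of_lt {ε : ℝ} (hε : 0 < ε) (f : ℝ → ℝ) :
    ∃ δ : ℕ → ℝ, StrictMono δ ∧ (∀ n : ℕ, ((n : ℝ) + 2) * ε ≤ δ n) ∧
      ∀ n, ∀ k < n, f (δ k) + ε ≤ δ n := by
  let δ : ℕ → ℝ := fun n ↦ Nat.rec (2 * ε) (fun _ d ↦ max d (f d) + ε) n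
  have hsucc (n : ℕ) : δ (n + 1) = max (δ n) (f (δ n)) + ε := rfl
  have hmono : StrictMono δ := strictMono_nat_of_lt_succ fun n ↦ by
    rw [hsucc]; linarith [le_max_left (δ n) (f (δ n))]
  refine ⟨δ, hmono, fun n ↦ ?_, fun n k hk ↦ ?_⟩
  · induction n with
    | zero => simp [δ]
    | succ n ih => push_cast; rw [hsucc]; linarith [le_max_left (δ n) (f (δ n))]
  · calc f (δ k) + ε ≤ δ (k + 1) := by rw [hsucc]; linarith [le_max_right (δ k) (f (δ k))]
      _ ≤ δ n := hmono.monotone hk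

/-- In an unbounded metric space with asymptotically isolated balls (witnessed by `ε`),
there exist an increasing sequence of reals `(δ n)` and points `(x n)` such that
`δ n ≥ (n+2)ε`, `B_{δ n − ε}(x k) ⊄ B_{2ε}(x k)` for `k < n`,
`B_{δ n}(x n) = B_ε(x n)`, and moreover `d(x k, x n) ≥ δ n` for `k < n`. -/
theorem stmt11 {X : Type*} [MetricSpace X]
    (hX : ¬ Bornology.IsBounded (Set.univ : Set X))
    (ε : ℝ) (hε : 0 < ε)
    (hiso : ∀ δ : ℝ, ε ≤ δ → ∃ x : X, Metric.closedBall x ε = Metric.closedBall x δ) :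
    ∃ δ : ℕ → ℝ, ∃ x : ℕ → X, StrictMono δ ∧
      (∀ n : ℕ, ((n : ℝ) + 2) * ε ≤ δ n) ∧
      (∀ n : ℕ, ∀ k < n,
        ¬ (Metric.closedBall (x k) (δ n - ε) ⊆ Metric.closedBall (x k) (2 * ε))) ∧
      (∀ n : ℕ, Metric.closedBall (x n) (δ n) = Metric.closedBall (x n) ε) ∧
      (∀ n : ℕ, ∀ k < n, δ n ≤ dist (x k) (x n)) := by
  choose R hR using fun y : X ↦ exists_closedBall_not_subset_closedBall hX y (2 * ε)
  choose c hc using fun d : ℝ ↦ hiso (max ε d) (le_max_left _ _)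
  obtain ⟨δ, hmono, hlow, hstep⟩ := exists_strictMono_apply_add_le_of_lt hε (fun d ↦ R (c d))
  have hball (n : ℕ) : closedBall (c (δ n)) (δ n) = closedBall (c (δ n)) ε := by
    have hεδ : ε ≤ δ n := by nlinarith [hlow n, (n.cast_nonneg : (0 : ℝ) ≤ n)]
    rw [hc, max_eq_right hεδ]
  have hfar (n k : ℕ) (hk : k < n) :
      ¬ closedBall (c (δ k)) (δ n - ε) ⊆ closedBall (c (δ k)) (2 * ε) := fun h ↦
    hR _ ((closedBall_subset_closedBall (by linarith [hstep n k hk])).trans h)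
  exact ⟨δ, fun n ↦ c (δ n), hmono, hlow, hfar, hball, fun n k hk ↦
    le_dist_of_closedBall_eq_of_not_subset (hball n) (hfar n k hk)⟩
end

section
/- Let X be an unbounded metric space with asymptotically isolated balls witnessed by ε > 0, and let (x_n)_{n∈ω}, (δ_n) be points and radii as in the asymptotically-isolated-balls construction (with d(x_k,x_n) ≥ δ_n ≥ (n+2)ε for k < n and B_{δ_n}(x_n) = B_ε(x_n)). Set D_ε = ⋃_{n∈ω} B_ε(x_n). Then the characteristic function f: X → {0,1} of D_ε is slowly oscillating. -/
/-!
Choose `N` with `δ' + ε ≤ δ n` for all `n ≥ N` (possible since `δ n ≥ (n + 2) ε → ∞`) and take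
`B = ⋃ n < N, B_ε(x n)`. For `n ≥ N` the ball `B_ε(x n) = B_{δ n}(x n)` swallows everything
within `δ'` of itself, so a set of diameter `≤ δ'` outside `B` that meets `D_ε` lies in `D_ε`,
and the characteristic function is constant on it.
-/

open Filter Metric

theorem Metric.mem_closedBall_of_closedBall_eq {X : Type*} [PseudoMetricSpace X] {c y z : X}
    {ε r : ℝ} (hball : closedBall c r = closedBall c ε) (hy : y ∈ closedBall c ε)
    (hzy : dist z y ≤ r - ε) : z ∈ closedBall c ε := by
  rw [← hball, mem_closedBall]
  calc dist z c ≤ dist z y + dist y c := dist_triangle _ _ _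
    _ ≤ (r - ε) + ε := add_le_add hzy (mem_closedBall.mp hy)
    _ = r := sub_add_cancel r ε

theorem mem_iUnion_of_dist_le_of_notMem_biUnion {X : Type*} [PseudoMetricSpace X]
    {s : ℕ → Set X} {N : ℕ} {δ' : ℝ}
    (hsep : ∀ n ≥ N, ∀ y ∈ s n, ∀ z, dist z y ≤ δ' → z ∈ s n) {y z : X}
    (hy : y ∈ ⋃ n, s n) (hyN : y ∉ ⋃ n ∈ Finset.range N, s n) (hzy : dist z y ≤ δ') :
    z ∈ ⋃ n, s n := by
  obtain ⟨n, hyn⟩ := Set.mem_iUnion.mp hy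
  have hNn : N ≤ n := by
    by_contra! hn
    exact hyN (Set.mem_biUnion (Finset.mem_range.mpr hn) hyn)
  exact Set.mem_iUnion.mpr ⟨n, hsep n hNn y hyn z hzy⟩

theorem stmt12_general {X : Type*} [MetricSpace X] (ε : ℝ) (hε : 0 < ε)
    (x : ℕ → X) (δ : ℕ → ℝ)
    (h1 : ∀ n : ℕ, ((n : ℝ) + 2) * ε ≤ δ n)
    (h3 : ∀ n : ℕ, Metric.closedBall (x n) (δ n) = Metric.closedBall (x n) ε) :
    ∀ ε' : ℝ, 0 < ε' → ∀ δ' : ℝ, ∃ B : Set X, Bornology.IsBounded B ∧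
      ∀ A : Set X, A ⊆ Bᶜ → (∀ y ∈ A, ∀ z ∈ A, dist y z ≤ δ') →
        ∀ y ∈ A, ∀ z ∈ A,
          |Set.indicator (⋃ n, Metric.closedBall (x n) ε) (fun _ => (1 : ℝ)) y -
            Set.indicator (⋃ n, Metric.closedBall (x n) ε) (fun _ => (1 : ℝ)) z| ≤ ε' := by
  intro ε' hε' δ'
  have hδ : Tendsto δ atTop atTop := tendsto_atTop_mono h1 <|
    (tendsto_natCast_atTop_atTop.atTop_add tendsto_const_nhds).atTop_mul_const hε
  obtain ⟨N, hN⟩ := eventually_atTop.mp (hδ.eventually_ge_atTop (δ' + ε))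
  have hsep : ∀ n ≥ N, ∀ y ∈ closedBall (x n) ε, ∀ z, dist z y ≤ δ' →
      z ∈ closedBall (x n) ε := fun n hn y hy z hzy =>
    mem_closedBall_of_closedBall_eq (h3 n) hy (by linarith [hN n hn])
  refine ⟨⋃ n ∈ Finset.range N, closedBall (x n) ε,
    (Bornology.isBounded_biUnion_finset _).mpr fun _ _ => isBounded_closedBall, ?_⟩
  intro A hA hdiam y hy z hz
  have hmem : y ∈ ⋃ n, closedBall (x n) ε ↔ z ∈ ⋃ n, closedBall (x n) ε :=
    ⟨fun hyD => mem_iUnion_of_dist_le_of_notMem_biUnion hsep hyD (hA hy) (hdiam z hz y hy),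
      fun hzD => mem_iUnion_of_dist_le_of_notMem_biUnion hsep hzD (hA hz) (hdiam y hy z hz)⟩
  rw [Set.indicator_const_eq_indicator_const hmem, sub_self, abs_zero]
  exact hε'.le

/-- The characteristic function of `D_ε = ⋃ n, B_ε(x n)` arising from the
asymptotically-isolated-balls construction is slowly oscillating. -/
theorem stmt12 {X : Type*} [MetricSpace X] (ε : ℝ) (hε : 0 < ε)
    (x : ℕ → X) (δ : ℕ → ℝ)
    (h1 : ∀ n : ℕ, ((n : ℝ) + 2) * ε ≤ δ n)
    (h2 : ∀ n : ℕ, ∀ k < n, δ n ≤ dist (x k) (x n))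
    (h3 : ∀ n : ℕ, Metric.closedBall (x n) (δ n) = Metric.closedBall (x n) ε) :
    ∀ ε' : ℝ, 0 < ε' → ∀ δ' : ℝ, ∃ B : Set X, Bornology.IsBounded B ∧
      ∀ A : Set X, A ⊆ Bᶜ → (∀ y ∈ A, ∀ z ∈ A, dist y z ≤ δ') →
        ∀ y ∈ A, ∀ z ∈ A,
          |Set.indicator (⋃ n, Metric.closedBall (x n) ε) (fun _ => (1 : ℝ)) y -
            Set.indicator (⋃ n, Metric.closedBall (x n) ε) (fun _ => (1 : ℝ)) z| ≤ ε' :=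
  stmt12_general ε hε x δ h1 h3
end

section
/- The Cantor macro-cube 2^{<ℕ} has no asymptotically isolated balls: for every ε < ∞ there exists a finite δ ≥ ε such that for all x ∈ 2^{<ℕ}, B_ε(x) ≠ B_δ(x). -/
/-!
Flipping the `n`-th coordinate of `x` gives a point at distance exactly `2 ^ n` from `x`.
Taking `2 ^ n > ε`, this point lies in `B_{2^n}(x)` but not in `B_ε(x)`, whatever `x` is.
-/

/-- The Cantor macro-cube: eventually-zero 0-1 sequences. -/
def CMC : Type := {x : ℕ → Bool // {n | x n = true}.Finite}

/-- The ultrametric `d((x_n),(y_n)) = max_n 2^n |x_n − y_n|` on the Cantor macro-cube. -/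
noncomputable def cdist (x y : CMC) : ℝ :=
  sSup (insert 0 {r : ℝ | ∃ n : ℕ, x.1 n ≠ y.1 n ∧ r = 2 ^ n})

namespace CMC

def flip (x : CMC) (n : ℕ) : CMC :=
  ⟨Function.update x.1 n (!x.1 n), (x.2.insert n).subset fun m hm => by
    by_cases h : m = n
    · exact Or.inl h
    · exact Or.inr (by simpa [Function.update_of_ne h] using hm)⟩

theorem flip_apply_ne_iff (x : CMC) (n m : ℕ) : (x.flip n).1 m ≠ x.1 m ↔ m = n := by
  by_cases h : m = n <;> simp [flip, h]

theorem cdist_flip_self (x : CMC) (n : ℕ) : cdist (x.flip n) x = 2 ^ n := by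
  have hdiff : {r : ℝ | ∃ m, (x.flip n).1 m ≠ x.1 m ∧ r = 2 ^ m} = {2 ^ n} := by
    ext r
    simp [flip_apply_ne_iff]
  rw [cdist, hdiff, csSup_pair]
  exact max_eq_right (by positivity)

end CMC

/-- The Cantor macro-cube has no asymptotically isolated balls: for every `ε` there is a
finite `δ ≥ ε` such that `B_ε(x) ≠ B_δ(x)` for all `x`. -/
theorem stmt14 :
    ∀ ε : ℝ, ∃ δ : ℝ, ε ≤ δ ∧
      ∀ x : CMC, {y : CMC | cdist y x ≤ ε} ≠ {y : CMC | cdist y x ≤ δ} := by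
  intro ε
  obtain ⟨n, hn⟩ := pow_unbounded_of_one_lt ε one_lt_two
  refine ⟨2 ^ n, hn.le, fun x hballs => ?_⟩
  have hflip : x.flip n ∈ {y : CMC | cdist y x ≤ 2 ^ n} := (CMC.cdist_flip_self x n).le
  have hflip_far : ε < cdist (x.flip n) x := CMC.cdist_flip_self x n ▸ hn
  exact hflip_far.not_ge (hballs.symm ▸ hflip : x.flip n ∈ {y : CMC | cdist y x ≤ ε})
end

section
/- Let 𝒰 be a free ultrafilter on ω with χ(𝒰) < 𝔡, where χ(𝒰) is the smallest cardinality of a base of 𝒰. Then the linearly preordered set (ω^{↑ω}, ≤_𝒰) of finite-to-one functions ω → ω, where f ≤_𝒰 g iff {n : f(n) ≤ g(n)} ∈ 𝒰, has both coinitiality and cofinality equal to 𝔡. -/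
/-- The character `χ(𝒰)` of an ultrafilter on ℕ: least cardinality of a base. -/
noncomputable def uchar (U : Ultrafilter ℕ) : Cardinal :=
  sInf {c : Cardinal | ∃ B : Set (Set ℕ), Cardinal.mk B = c ∧
    (∀ b ∈ B, b ∈ U) ∧ ∀ A ∈ U, ∃ b ∈ B, b ⊆ A}

/-- `𝔮(𝒰)`: coinitiality of the finite-to-one functions under `≤_𝒰`. -/
noncomputable def qU (U : Ultrafilter ℕ) : Cardinal :=
  sInf {c : Cardinal | ∃ A : Set (ℕ → ℕ), Cardinal.mk A = c ∧
    (∀ f ∈ A, FinToOne f) ∧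
    ∀ g : ℕ → ℕ, FinToOne g → ∃ f ∈ A, {n | f n ≤ g n} ∈ U}

/-- `𝔡(𝒰)`: cofinality of the finite-to-one functions under `≤_𝒰`. -/
noncomputable def dU (U : Ultrafilter ℕ) : Cardinal :=
  sInf {c : Cardinal | ∃ A : Set (ℕ → ℕ), Cardinal.mk A = c ∧
    (∀ f ∈ A, FinToOne f) ∧
    ∀ g : ℕ → ℕ, FinToOne g → ∃ f ∈ A, {n | g n ≤ f n} ∈ U}

/-!
A dominating family `D` yields the `≤_𝒰`-cofinal family `{f + id | f ∈ D}` and the coinitial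
family `{ceilInv (majorant f) | f ∈ D}` of finite-to-one functions, so `𝔮(𝒰), 𝔡(𝒰) ≤ 𝔡`.
Conversely, let `B` be a base of `𝒰`; its members are infinite since `𝒰` is free. If `A` is
cofinal, then for every `h` some `f ∈ A` lies above the monotone majorant of `h` on some `b ∈ B`,
and `n ↦ f (min (b ∩ [n, ∞)))` dominates `h`. If `A` is coinitial, some `f ∈ A` lies below the slow
inverse `ceilInv (majorant h)` on some `b ∈ B`, and `k ↦` (the first point of `b` beyond the finite
set `{f ≤ k}`) dominates `h`. Either way `|A| · χ(𝒰)` functions dominate, and as `𝔡` is uncountable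
and `χ(𝒰) < 𝔡`, this forces `|A| ≥ 𝔡`.
-/

open Cardinal Set Filter

lemma exists_mk_eq_sInf_mk {α : Type*} {P : Set α → Prop} (h : ∃ A, P A) :
    ∃ A, P A ∧ #A = sInf {c | ∃ A : Set α, #A = c ∧ P A} := by
  obtain ⟨A, hA⟩ := h
  obtain ⟨B, hB, hPB⟩ := csInf_mem (s := {c | ∃ A : Set α, #A = c ∧ P A}) ⟨#A, A, rfl, hA⟩
  exact ⟨B, hPB, hB⟩

lemma FinToOne.of_le_self {u : ℕ → ℕ} (hu : ∀ n, n ≤ u n) : FinToOne u := fun k =>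
  (finite_Iic k).subset fun n (hn : u n = k) => hn ▸ hu n

lemma FinToOne.finite_setOf_le {g : ℕ → ℕ} (hg : FinToOne g) (k : ℕ) :
    {n | g n ≤ k}.Finite :=
  (finite_Iic k).preimage' fun i _ => hg i

lemma Ultrafilter.infinite_of_le_cofinite {U : Ultrafilter ℕ}
    (hfree : (U : Filter ℕ) ≤ cofinite) {b : Set ℕ} (hb : b ∈ U) : b.Infinite :=
  frequently_cofinite_iff_infinite.mp ((Eventually.frequently hb).filter_mono hfree)

def majorant (h : ℕ → ℕ) (n : ℕ) : ℕ := n + (Finset.range (n + 1)).sup h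

lemma le_majorant (h : ℕ → ℕ) (n : ℕ) : h n ≤ majorant h n :=
  (Finset.le_sup (Finset.self_mem_range_succ n)).trans (Nat.le_add_left _ _)

lemma self_le_majorant (h : ℕ → ℕ) (n : ℕ) : n ≤ majorant h n := Nat.le_add_right _ _

lemma monotone_majorant (h : ℕ → ℕ) : Monotone (majorant h) :=
  monotone_id.add fun _ _ hmn => Finset.sup_mono (Finset.range_subset_range.mpr (by omega))

noncomputable def ceilInv (u : ℕ → ℕ) (n : ℕ) : ℕ := sInf {k | n ≤ u k}

lemma ceilInv_le {u : ℕ → ℕ} {n k : ℕ} (h : n ≤ u k) : ceilInv u n ≤ k := Nat.sInf_le h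

lemma finToOne_ceilInv {u : ℕ → ℕ} (hu : ∀ n, n ≤ u n) : FinToOne (ceilInv u) := fun k =>
  (finite_Iic (u k)).subset fun n (hn : ceilInv u n = k) =>
    hn ▸ Nat.sInf_mem (s := {k | n ≤ u k}) ⟨n, hu n⟩

noncomputable def nextIn (b : Set ℕ) (n : ℕ) : ℕ := sInf {m | m ∈ b ∧ n ≤ m}

lemma nextIn_mem_and_le {b : Set ℕ} (hb : b.Infinite) (n : ℕ) :
    nextIn b n ∈ b ∧ n ≤ nextIn b n := by
  obtain ⟨m, hm, hnm⟩ := hb.exists_gt n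
  exact Nat.sInf_mem (s := {m | m ∈ b ∧ n ≤ m}) ⟨m, hm, hnm.le⟩

lemma le_comp_nextIn {h f : ℕ → ℕ} {b : Set ℕ} (hb : b.Infinite)
    (hfb : ∀ m ∈ b, majorant h m ≤ f m) (n : ℕ) : h n ≤ f (nextIn b n) := by
  obtain ⟨hmem, hle⟩ := nextIn_mem_and_le hb n
  calc h n ≤ majorant h n := le_majorant h n
    _ ≤ majorant h (nextIn b n) := monotone_majorant h hle
    _ ≤ f (nextIn b n) := hfb _ hmem

lemma le_nextIn_sSup_of_le_ceilInv {h f : ℕ → ℕ} (hf : FinToOne f) {b : Set ℕ}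
    (hb : b.Infinite) (hfb : ∀ m ∈ b, f m ≤ ceilInv (majorant h) m) (k : ℕ) :
    h k ≤ nextIn b (sSup {m | f m ≤ k} + 1) := by
  set j := nextIn b (sSup {m | f m ≤ k} + 1)
  obtain ⟨hjb, hj⟩ := nextIn_mem_and_le hb (sSup {m | f m ≤ k} + 1)
  have hfj : k < f j := by
    by_contra! hfj
    have := le_csSup (hf.finite_setOf_le k).bddAbove hfj
    omega
  by_contra! hjh
  exact (hfj.trans_le (hfb j hjb)).not_ge (ceilInv_le (hjh.le.trans (le_majorant h k)))

def IsDominating (D : Set (ℕ → ℕ)) : Prop := ∀ g : ℕ → ℕ, ∃ f ∈ D, ∀ n, g n ≤ f n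

lemma exists_isDominating_mk_eq_domNum : ∃ D, IsDominating D ∧ #D = domNum :=
  exists_mk_eq_sInf_mk ⟨univ, fun g => ⟨g, mem_univ g, fun _ => le_rfl⟩⟩

lemma domNum_le_mk {D : Set (ℕ → ℕ)} (hD : IsDominating D) : domNum ≤ #D :=
  csInf_le' ⟨D, rfl, hD⟩

lemma IsDominating.not_countable {D : Set (ℕ → ℕ)} (hD : IsDominating D) : ¬ D.Countable := by
  intro hc
  obtain ⟨F, rfl⟩ := hc.exists_eq_range ((hD 0).imp fun _ hf => hf.1)
  obtain ⟨_, ⟨i, rfl⟩, hi⟩ := hD fun n => F n n + 1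
  exact Nat.not_succ_le_self _ (hi i)

lemma aleph0_lt_domNum : ℵ₀ < domNum := by
  obtain ⟨D, hD, hmk⟩ := exists_isDominating_mk_eq_domNum
  rw [← hmk, ← not_le, mk_le_aleph0_iff, countable_coe_iff]
  exact hD.not_countable

lemma domNum_le_mul_of_forall_le {A : Set (ℕ → ℕ)} {B : Set (Set ℕ)}
    (Φ : (ℕ → ℕ) → Set ℕ → ℕ → ℕ) (h : ∀ g : ℕ → ℕ, ∃ f ∈ A, ∃ b ∈ B, ∀ n, g n ≤ Φ f b n) :
    domNum ≤ #A * #B := by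
  calc domNum ≤ #(range fun p : A × B => Φ p.1 p.2) := domNum_le_mk fun g => by
        obtain ⟨f, hf, b, hb, hg⟩ := h g
        exact ⟨_, ⟨(⟨f, hf⟩, ⟨b, hb⟩), rfl⟩, hg⟩
    _ ≤ #A * #B := mk_range_le.trans (by simp [mk_prod])

section UltrafilterOrder

variable (U : Ultrafilter ℕ)

def IsUCoinitial (A : Set (ℕ → ℕ)) : Prop :=
  (∀ f ∈ A, FinToOne f) ∧ ∀ g : ℕ → ℕ, FinToOne g → ∃ f ∈ A, {n | f n ≤ g n} ∈ U

def IsUCofinal (A : Set (ℕ → ℕ)) : Prop :=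
  (∀ f ∈ A, FinToOne f) ∧ ∀ g : ℕ → ℕ, FinToOne g → ∃ f ∈ A, {n | g n ≤ f n} ∈ U

def IsUBase (B : Set (Set ℕ)) : Prop := (∀ b ∈ B, b ∈ U) ∧ ∀ A ∈ U, ∃ b ∈ B, b ⊆ A

lemma exists_isUCoinitial_mk_eq_qU : ∃ A, IsUCoinitial U A ∧ #A = qU U :=
  exists_mk_eq_sInf_mk
    ⟨FinToOne, fun _ hf => hf, fun g hg => ⟨g, hg, univ_mem' fun n => le_refl (g n)⟩⟩

lemma exists_isUCofinal_mk_eq_dU : ∃ A, IsUCofinal U A ∧ #A = dU U :=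
  exists_mk_eq_sInf_mk
    ⟨FinToOne, fun _ hf => hf, fun g hg => ⟨g, hg, univ_mem' fun n => le_refl (g n)⟩⟩

lemma exists_isUBase_mk_eq_uchar : ∃ B, IsUBase U B ∧ #B = uchar U :=
  exists_mk_eq_sInf_mk ⟨{s | s ∈ U}, fun _ hb => hb, fun A hA => ⟨A, hA, subset_rfl⟩⟩

lemma qU_le_mk {D : Set (ℕ → ℕ)} (hD : IsDominating D) : qU U ≤ #D := by
  refine le_trans (csInf_le' ⟨_, rfl, ?_, ?_⟩)
    (mk_range_le (f := fun f : D => ceilInv (majorant f)))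
  · rintro _ ⟨f, rfl⟩
    exact finToOne_ceilInv (self_le_majorant f)
  · intro g hg
    obtain ⟨f, hf, hfg⟩ := hD fun k => sSup {n | g n ≤ k}
    refine ⟨_, ⟨⟨f, hf⟩, rfl⟩, univ_mem' fun n => ceilInv_le ?_⟩
    calc n ≤ sSup {m | g m ≤ g n} := le_csSup (hg.finite_setOf_le _).bddAbove (le_refl (g n))
      _ ≤ f (g n) := hfg _
      _ ≤ majorant f (g n) := le_majorant f _

lemma dU_le_mk {D : Set (ℕ → ℕ)} (hD : IsDominating D) : dU U ≤ #D := by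
  refine le_trans (csInf_le' ⟨_, rfl, ?_, ?_⟩) (mk_range_le (f := fun f : D => f.1 + id))
  · rintro _ ⟨f, rfl⟩
    exact FinToOne.of_le_self fun n => Nat.le_add_left n _
  · intro g _
    obtain ⟨f, hf, hfg⟩ := hD g
    exact ⟨_, ⟨⟨f, hf⟩, rfl⟩, univ_mem' fun n => (hfg n).trans (Nat.le_add_right _ _)⟩

lemma qU_le_domNum : qU U ≤ domNum := by
  obtain ⟨D, hD, hmk⟩ := exists_isDominating_mk_eq_domNum
  exact hmk ▸ qU_le_mk U hD

lemma dU_le_domNum : dU U ≤ domNum := by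
  obtain ⟨D, hD, hmk⟩ := exists_isDominating_mk_eq_domNum
  exact hmk ▸ dU_le_mk U hD

variable {U}

lemma domNum_le_qU_mul_uchar (hfree : (U : Filter ℕ) ≤ cofinite) :
    domNum ≤ qU U * uchar U := by
  obtain ⟨A, ⟨hAfin, hAco⟩, hAmk⟩ := exists_isUCoinitial_mk_eq_qU U
  obtain ⟨B, ⟨hBU, hBbase⟩, hBmk⟩ := exists_isUBase_mk_eq_uchar U
  rw [← hAmk, ← hBmk]
  refine domNum_le_mul_of_forall_le (fun f b k => nextIn b (sSup {m | f m ≤ k} + 1)) fun h => ?_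
  obtain ⟨f, hfA, hfU⟩ := hAco _ (finToOne_ceilInv (self_le_majorant h))
  obtain ⟨b, hbB, hbf⟩ := hBbase _ hfU
  exact ⟨f, hfA, b, hbB, le_nextIn_sSup_of_le_ceilInv (hAfin f hfA)
    (Ultrafilter.infinite_of_le_cofinite hfree (hBU b hbB)) fun m hm => hbf hm⟩

lemma domNum_le_dU_mul_uchar (hfree : (U : Filter ℕ) ≤ cofinite) :
    domNum ≤ dU U * uchar U := by
  obtain ⟨A, ⟨-, hAco⟩, hAmk⟩ := exists_isUCofinal_mk_eq_dU U
  obtain ⟨B, ⟨hBU, hBbase⟩, hBmk⟩ := exists_isUBase_mk_eq_uchar U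
  rw [← hAmk, ← hBmk]
  refine domNum_le_mul_of_forall_le (fun f b n => f (nextIn b n)) fun h => ?_
  obtain ⟨f, hfA, hfU⟩ := hAco _ (FinToOne.of_le_self (self_le_majorant h))
  obtain ⟨b, hbB, hbf⟩ := hBbase _ hfU
  exact ⟨f, hfA, b, hbB,
    le_comp_nextIn (Ultrafilter.infinite_of_le_cofinite hfree (hBU b hbB)) fun m hm => hbf hm⟩

lemma domNum_le_of_le_mul_uchar (hchar : uchar U < domNum) {κ : Cardinal}
    (h : domNum ≤ κ * uchar U) : domNum ≤ κ := by
  by_contra! hκ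
  exact (mul_lt_of_lt aleph0_lt_domNum.le hκ hchar).not_ge h

end UltrafilterOrder

/-- If a free ultrafilter `𝒰` on ℕ has character `χ(𝒰) < 𝔡`, then the coinitiality and
cofinality of the finite-to-one functions under `≤_𝒰` are both equal to `𝔡`. -/
theorem stmt18 (U : Ultrafilter ℕ) (hfree : (U : Filter ℕ) ≤ Filter.cofinite)
    (hchar : uchar U < domNum) :
    qU U = domNum ∧ dU U = domNum :=
  ⟨(qU_le_domNum U).antisymm (domNum_le_of_le_mul_uchar hchar (domNum_le_qU_mul_uchar hfree)),
    (dU_le_domNum U).antisymm (domNum_le_of_le_mul_uchar hchar (domNum_le_dU_mul_uchar hfree))⟩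
end
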